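/- arXiv:1802.02562 — 2 statements merged into one kernel-verified Lean document; each statement's English description precedes it below -/
import Mathlib

section
/- Let M be a matroid on a finite nonempty ground set L with rank function ρ. Define S_0 = ∅ and, iteratively for i ≥ 1, let B_i be the maximal set X ⊆ L \ S_{i−1} minimizing (ρ(X ∪ S_{i−1}) − ρ(S_{i−1}))/|X|, and set S_i = S_{i−1} ∪ B_i, stopping at the first k with S_k = L. Then for every maxmin-fair distribution F over the independent sets of M, every i ∈ {1,…,k} and every u ∈ B_i, the satisfaction probability of u equals λ_i = (ρ(S_i) − ρ(S_{i−1}))/|B_i|. -/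
open scoped Classical

variable {α : Type*}

/-- `p` is a probability distribution over the feasible solutions `sol`. -/
def IsDistrib [Fintype α] (sol : Finset α → Prop) (p : Finset α → ℝ) : Prop :=
  (∀ A, 0 ≤ p A) ∧ (∀ A, p A ≠ 0 → sol A) ∧ (∑ A : Finset α, p A) = 1

/-- The satisfaction probability of individual `u` under the distribution `p`. -/
def sat [Fintype α] [DecidableEq α] (p : Finset α → ℝ) (u : α) : ℝ :=
  ∑ A : Finset α, if u ∈ A then p A else 0

/-- `F` is a maxmin-fair distribution over the feasible solutions `sol`. -/
def MaxminFair [Fintype α] [DecidableEq α] (sol : Finset α → Prop) (F : Finset α → ℝ) : Prop :=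
  IsDistrib sol F ∧
    ∀ D, IsDistrib sol D → ∀ u, sat F u < sat D u →
      ∃ v, sat D v < sat F v ∧ sat F v ≤ sat F u

/-- The rank of the finite set `X` in the matroid `M`. -/
noncomputable def rnk [Fintype α] (M : Matroid α) (X : Finset α) : ℕ :=
  (X.powerset.filter fun A : Finset α => M.Indep (A : Set α)).sup Finset.card

/-- `X` is a nonempty subset of `L \ S₀` minimizing the ratio
`(ρ(X ∪ S₀) − ρ(S₀)) / |X|`. -/
def MinRatioSet [Fintype α] [DecidableEq α] (M : Matroid α) (S₀ X : Finset α) : Prop :=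
  X.Nonempty ∧ X ⊆ Finset.univ \ S₀ ∧
    ∀ Y : Finset α, Y.Nonempty → Y ⊆ Finset.univ \ S₀ →
      ((rnk M (X ∪ S₀) : ℝ) - (rnk M S₀ : ℝ)) / (X.card : ℝ) ≤
        ((rnk M (Y ∪ S₀) : ℝ) - (rnk M S₀ : ℝ)) / (Y.card : ℝ)

/-!
Maxmin-fairness yields an exchange property: if `A₀` carries mass and `A₁` is independent
with `t ∈ A₁ \ A₀`, moving the mass of `A₀` onto `A₁` raises `t`, so some `v ∈ A₀ \ A₁` has
`sat v ≤ sat t`. Let `T` be the individuals outside `S₀ = S_{i-1}` below `λ = λ_i`; `T` is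
closed downwards outside `S₀`, so by the exchange property every independent set `A` in the
support spans `T` from `A ∩ (S₀ ∪ T)`, whence `ρ(T ∪ S₀) ≤ ρ(S₀) + |A ∩ T|`. Averaging over
`A` gives `ρ(T ∪ S₀) − ρ(S₀) ≤ ∑_T sat < λ |T|`, against the minimality of the ratio of `B_i`
unless `T = ∅`. So every member of `B_i` gets at least `λ`; since `∑_X sat ≤ ρ(X)` for all `X`
and, inductively, `∑_{S₀} sat = ρ(S₀)`, together they get at most `ρ(S_i) − ρ(S₀) = λ |B_i|`.
-/

section Rank

variable [Fintype α] (M : Matroid α)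

lemma le_rnk_of_indep {A X : Finset α} (hA : M.Indep (A : Set α)) (hAX : A ⊆ X) :
    A.card ≤ rnk M X :=
  Finset.le_sup (Finset.mem_filter.2 ⟨Finset.mem_powerset.2 hAX, hA⟩)

lemma coe_rnk_eq_eRk (X : Finset α) : (rnk M X : ℕ∞) = M.eRk X := by
  obtain ⟨I, hI⟩ := M.exists_isBasis' (X : Set α)
  obtain ⟨J, rfl⟩ := (X.finite_toSet.subset hI.subset).exists_finset_coe
  have hJ : rnk M X = J.card := by
    refine le_antisymm (Finset.sup_le fun A hA => ?_) (le_rnk_of_indep M hI.indep ?_)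
    · rw [Finset.mem_filter, Finset.mem_powerset] at hA
      have := hA.2.encard_le_eRk_of_subset (Finset.coe_subset.2 hA.1)
      rwa [← hI.encard_eq_eRk, Set.encard_coe_eq_coe_finsetCard,
        Set.encard_coe_eq_coe_finsetCard, Nat.cast_le] at this
    · exact_mod_cast hI.subset
  rw [hJ, ← hI.encard_eq_eRk, Set.encard_coe_eq_coe_finsetCard]

lemma rnk_empty : rnk M (∅ : Finset α) = 0 := by
  simpa [eq_comm] using coe_rnk_eq_eRk M ∅

lemma rnk_union_le_add_card [DecidableEq α] (X Y : Finset α) :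
    rnk M (X ∪ Y) ≤ rnk M X + Y.card := by
  have := M.eRk_union_le_eRk_add_encard X Y
  rw [← Finset.coe_union, ← coe_rnk_eq_eRk, ← coe_rnk_eq_eRk,
    Set.encard_coe_eq_coe_finsetCard] at this
  exact_mod_cast this

lemma rnk_le_of_inter_ground_subset_closure {W X : Finset α}
    (h : (W : Set α) ∩ M.E ⊆ M.closure X) : rnk M W ≤ rnk M X := by
  have := (M.eRk_mono h).trans_eq (M.eRk_closure_eq X)
  rwa [Matroid.eRk_inter_ground, ← coe_rnk_eq_eRk, ← coe_rnk_eq_eRk, Nat.cast_le] at this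

end Rank

section Distrib

variable [Fintype α] {sol : Finset α → Prop} {p : Finset α → ℝ}

lemma IsDistrib.sum_mul_const (hp : IsDistrib sol p) (c : ℝ) : ∑ A, p A * c = c := by
  rw [← Finset.sum_mul, hp.2.2, one_mul]

lemma IsDistrib.sum_mul_le_sum_mul (hp : IsDistrib sol p) {f g : Finset α → ℝ}
    (h : ∀ A, p A ≠ 0 → f A ≤ g A) : ∑ A, p A * f A ≤ ∑ A, p A * g A := by
  refine Finset.sum_le_sum fun A _ => ?_
  by_cases hA : p A = 0
  · simp [hA]
  · exact mul_le_mul_of_nonneg_left (h A hA) (hp.1 A)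

variable [DecidableEq α]

lemma sum_sat_eq (p : Finset α → ℝ) (T : Finset α) :
    ∑ t ∈ T, sat p t = ∑ A, p A * (A ∩ T).card := by
  simp only [sat]
  rw [Finset.sum_comm]
  refine Finset.sum_congr rfl fun A _ => ?_
  rw [Finset.sum_ite_mem, Finset.sum_const, nsmul_eq_mul, Finset.inter_comm, mul_comm]

lemma IsDistrib.sum_sat_le (hp : IsDistrib sol p) {T : Finset α} {c : ℝ}
    (h : ∀ A, p A ≠ 0 → ((A ∩ T).card : ℝ) ≤ c) : ∑ t ∈ T, sat p t ≤ c := by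
  rw [sum_sat_eq, ← hp.sum_mul_const c]
  exact hp.sum_mul_le_sum_mul h

lemma IsDistrib.le_sum_sat (hp : IsDistrib sol p) {T : Finset α} {c : ℝ}
    (h : ∀ A, p A ≠ 0 → c ≤ (A ∩ T).card) : c ≤ ∑ t ∈ T, sat p t := by
  rw [sum_sat_eq, ← hp.sum_mul_const c]
  exact hp.sum_mul_le_sum_mul h

def transfer (p : Finset α → ℝ) (A₀ A₁ : Finset α) : Finset α → ℝ :=
  fun X => p X + p A₀ * ((if X = A₁ then 1 else 0) - (if X = A₀ then 1 else 0))

lemma sat_transfer (p : Finset α → ℝ) (A₀ A₁ : Finset α) (u : α) :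
    sat (transfer p A₀ A₁) u =
      sat p u + p A₀ * ((if u ∈ A₁ then 1 else 0) - (if u ∈ A₀ then 1 else 0)) := by
  simp [sat, transfer, ite_add_zero, Finset.sum_add_distrib, mul_sub, ← Finset.sum_filter,
    Finset.sum_sub_distrib, Finset.sum_ite_eq']

lemma isDistrib_transfer (hp : IsDistrib sol p) {A₀ A₁ : Finset α} (h₁ : sol A₁)
    (hne : A₀ ≠ A₁) : IsDistrib sol (transfer p A₀ A₁) := by
  obtain ⟨hnonneg, hsupp, hsum⟩ := hp
  refine ⟨fun X => ?_, fun X hX => ?_, ?_⟩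
  · by_cases h0 : X = A₀
    · subst h0
      simp [transfer, hne]
    · have := hnonneg X
      have := hnonneg A₀
      simp only [transfer, if_neg h0, sub_zero]
      split_ifs <;> linarith
  · by_cases h1 : X = A₁
    · exact h1 ▸ h₁
    · by_cases h0 : X = A₀
      · subst h0
        simp [transfer, hne] at hX
      · exact hsupp X (by simpa [transfer, h0, h1] using hX)
  · simp [transfer, Finset.sum_add_distrib, mul_sub, hsum]

end Distrib

section Fair

variable [Fintype α] [DecidableEq α] {sol : Finset α → Prop} {F : Finset α → ℝ}

theorem MaxminFair.exists_mem_sdiff_sat_le (hF : MaxminFair sol F) {A₀ A₁ : Finset α}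
    (h₀ : F A₀ ≠ 0) (h₁ : sol A₁) {t : α} (ht₁ : t ∈ A₁) (ht₀ : t ∉ A₀) :
    ∃ v ∈ A₀ \ A₁, sat F v ≤ sat F t := by
  have hpos : 0 < F A₀ := lt_of_le_of_ne (hF.1.1 A₀) (Ne.symm h₀)
  have hne : A₀ ≠ A₁ := fun h => ht₀ (h ▸ ht₁)
  have hlt : sat F t < sat (transfer F A₀ A₁) t := by
    rw [sat_transfer, if_pos ht₁, if_neg ht₀]
    linarith
  obtain ⟨v, hv, hvt⟩ := hF.2 _ (isDistrib_transfer hF.1 h₁ hne) t hlt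
  rw [sat_transfer] at hv
  have hshift : (if v ∈ A₁ then (1 : ℝ) else 0) - (if v ∈ A₀ then 1 else 0) < 0 :=
    neg_of_mul_neg_right (by linarith) hpos.le
  refine ⟨v, Finset.mem_sdiff.2 ⟨by_contra fun hv₀ => ?_, fun hv₁ => ?_⟩, hvt⟩ <;>
    split_ifs at hshift <;> norm_num at hshift

end Fair

/-- The paper's `λ`. -/
noncomputable def rankRatio [Fintype α] [DecidableEq α] (M : Matroid α) (S₀ X : Finset α) : ℝ :=
  ((rnk M (X ∪ S₀) : ℝ) - rnk M S₀) / X.card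

lemma MinRatioSet.disjoint [Fintype α] [DecidableEq α] {M : Matroid α} {S₀ B : Finset α}
    (hB : MinRatioSet M S₀ B) : Disjoint B S₀ :=
  Finset.disjoint_left.2 fun _ hu => (Finset.mem_sdiff.1 (hB.2.1 hu)).2

section MatroidFair

variable [Fintype α] [DecidableEq α] {M : Matroid α} {F : Finset α → ℝ}
  {S₀ T : Finset α}

lemma MaxminFair.mem_closure_of_forall_sat_le
    (hF : MaxminFair (fun A : Finset α => M.Indep (A : Set α)) F)
    (hT : ∀ t ∈ T, ∀ w ∉ S₀, sat F w ≤ sat F t → w ∈ T) {A : Finset α} (hA : F A ≠ 0)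
    {t : α} (ht : t ∈ T) (htE : t ∈ M.E) : t ∈ M.closure ↑(A ∩ (S₀ ∪ T)) := by
  have hI : M.Indep ↑(A ∩ (S₀ ∪ T)) :=
    (hF.1.2.1 A hA).subset (Finset.coe_subset.2 Finset.inter_subset_left)
  by_cases htA : t ∈ A
  · exact M.mem_closure_of_mem' (by simp [htA, ht])
  by_contra hcl
  have htI : t ∉ A ∩ (S₀ ∪ T) := fun h => htA (Finset.mem_inter.1 h).1
  have hins : M.Indep ↑(insert t (A ∩ (S₀ ∪ T))) := by
    rw [Finset.coe_insert, hI.insert_indep_iff_of_notMem (by exact_mod_cast htI)]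
    exact ⟨htE, hcl⟩
  obtain ⟨w, hw, hwt⟩ := hF.exists_mem_sdiff_sat_le hA hins (Finset.mem_insert_self t _) htA
  simp only [Finset.mem_sdiff, Finset.mem_insert, Finset.mem_inter, Finset.mem_union,
    not_or, not_and] at hw
  obtain ⟨hwA, -, hwST⟩ := hw
  obtain ⟨hwS, hwT⟩ := hwST hwA
  exact hwT (hT t ht w hwS hwt)

lemma MaxminFair.rnk_union_le_of_forall_sat_le
    (hF : MaxminFair (fun A : Finset α => M.Indep (A : Set α)) F)
    (hT : ∀ t ∈ T, ∀ w ∉ S₀, sat F w ≤ sat F t → w ∈ T) {A : Finset α} (hA : F A ≠ 0) :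
    rnk M (T ∪ S₀) ≤ rnk M S₀ + (A ∩ T).card := by
  refine le_trans (rnk_le_of_inter_ground_subset_closure M ?_) (rnk_union_le_add_card M S₀ _)
  rintro x ⟨hx, hxE⟩
  rcases Finset.mem_union.1 (Finset.mem_coe.1 hx) with hxT | hxS
  · refine M.closure_subset_closure ?_ (hF.mem_closure_of_forall_sat_le hT hA hxT hxE)
    intro y hy
    simp only [Finset.coe_inter, Finset.coe_union, Set.mem_inter_iff, Set.mem_union,
      Finset.mem_coe] at hy ⊢
    tauto
  · exact M.mem_closure_of_mem' (by simp [hxS])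

lemma MaxminFair.rnk_union_sub_le_sum_sat
    (hF : MaxminFair (fun A : Finset α => M.Indep (A : Set α)) F)
    (hT : ∀ t ∈ T, ∀ w ∉ S₀, sat F w ≤ sat F t → w ∈ T) :
    (rnk M (T ∪ S₀) : ℝ) - rnk M S₀ ≤ ∑ t ∈ T, sat F t :=
  hF.1.le_sum_sat fun A hA => by
    have := hF.rnk_union_le_of_forall_sat_le hT hA
    rw [sub_le_iff_le_add']
    exact_mod_cast this

theorem MaxminFair.rankRatio_le_sat
    (hF : MaxminFair (fun A : Finset α => M.Indep (A : Set α)) F) {B : Finset α}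
    (hB : MinRatioSet M S₀ B) {v : α} (hv : v ∉ S₀) : rankRatio M S₀ B ≤ sat F v := by
  by_contra! hlt
  set T := Finset.univ.filter fun w => w ∉ S₀ ∧ sat F w < rankRatio M S₀ B
  have hmem : ∀ w, w ∈ T ↔ w ∉ S₀ ∧ sat F w < rankRatio M S₀ B := by simp [T]
  have hTne : T.Nonempty := ⟨v, (hmem v).2 ⟨hv, hlt⟩⟩
  have hTsub : T ⊆ Finset.univ \ S₀ := fun w hw => by simp [((hmem w).1 hw).1]
  have hTcard : (0 : ℝ) < T.card := by exact_mod_cast hTne.card_pos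
  have hgain : rankRatio M S₀ B * T.card ≤ (rnk M (T ∪ S₀) : ℝ) - rnk M S₀ :=
    (le_div_iff₀ hTcard).1 (hB.2.2 T hTne hTsub)
  have hsum : ∑ t ∈ T, sat F t < rankRatio M S₀ B * T.card := by
    calc ∑ t ∈ T, sat F t < ∑ _t ∈ T, rankRatio M S₀ B :=
          Finset.sum_lt_sum_of_nonempty hTne fun t ht => ((hmem t).1 ht).2
      _ = rankRatio M S₀ B * T.card := by rw [Finset.sum_const, nsmul_eq_mul, mul_comm]
  have hT : ∀ t ∈ T, ∀ w ∉ S₀, sat F w ≤ sat F t → w ∈ T := fun t ht w hw hwt =>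
    (hmem w).2 ⟨hw, hwt.trans_lt ((hmem t).1 ht).2⟩
  linarith [hF.rnk_union_sub_le_sum_sat hT]

lemma IsDistrib.sum_sat_le_rnk {p : Finset α → ℝ}
    (hp : IsDistrib (fun A : Finset α => M.Indep (A : Set α)) p) (X : Finset α) :
    ∑ v ∈ X, sat p v ≤ rnk M X :=
  hp.sum_sat_le fun A hA => by
    exact_mod_cast le_rnk_of_indep M ((hp.2.1 A hA).subset (by simp)) Finset.inter_subset_right

theorem MaxminFair.sat_eq_rankRatio
    (hF : MaxminFair (fun A : Finset α => M.Indep (A : Set α)) F) {B : Finset α}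
    (hB : MinRatioSet M S₀ B) (hS₀ : ∑ v ∈ S₀, sat F v = rnk M S₀) :
    ∀ u ∈ B, sat F u = rankRatio M S₀ B := by
  have hdisj := hB.disjoint
  have hBcard : (0 : ℝ) < B.card := by exact_mod_cast hB.1.card_pos
  have hlow : ∀ u ∈ B, rankRatio M S₀ B ≤ sat F u :=
    fun _ hu => hF.rankRatio_le_sat hB (Finset.disjoint_left.1 hdisj hu)
  have hup : ∑ u ∈ B, sat F u ≤ ∑ _u ∈ B, rankRatio M S₀ B := by
    have := hF.1.sum_sat_le_rnk (B ∪ S₀)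
    rw [Finset.sum_union hdisj, hS₀] at this
    rw [Finset.sum_const, nsmul_eq_mul, rankRatio, mul_div_cancel₀ _ hBcard.ne']
    linarith
  intro u hu
  exact ((Finset.sum_eq_sum_iff_of_le hlow).1 (le_antisymm (Finset.sum_le_sum hlow) hup) u hu).symm

theorem MaxminFair.sum_sat_union_eq
    (hF : MaxminFair (fun A : Finset α => M.Indep (A : Set α)) F) {B : Finset α}
    (hB : MinRatioSet M S₀ B) (hS₀ : ∑ v ∈ S₀, sat F v = rnk M S₀) :
    ∑ v ∈ B ∪ S₀, sat F v = rnk M (B ∪ S₀) := by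
  have hdisj := hB.disjoint
  have hBcard : (B.card : ℝ) ≠ 0 := by exact_mod_cast hB.1.card_pos.ne'
  rw [Finset.sum_union hdisj, hS₀, Finset.sum_congr rfl (hF.sat_eq_rankRatio hB hS₀),
    Finset.sum_const, nsmul_eq_mul, rankRatio, mul_div_cancel₀ _ hBcard]
  ring

end MatroidFair

theorem maxminFair_sat_on_blocks_matroid_general [Fintype α] [DecidableEq α]
    (M : Matroid α)
    (k : ℕ) (B S : ℕ → Finset α)
    (hS0 : S 0 = ∅)
    (hSi : ∀ i, 1 ≤ i → i ≤ k → S i = S (i - 1) ∪ B i)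
    (hBmin : ∀ i, 1 ≤ i → i ≤ k → MinRatioSet M (S (i - 1)) (B i))
    (F : Finset α → ℝ)
    (hF : MaxminFair (fun A : Finset α => M.Indep (A : Set α)) F) :
    ∀ i, 1 ≤ i → i ≤ k → ∀ u ∈ B i,
      sat F u = ((rnk M (S i) : ℝ) - (rnk M (S (i - 1)) : ℝ)) / ((B i).card : ℝ) := by
  have hsum : ∀ i ≤ k, ∑ v ∈ S i, sat F v = rnk M (S i) := by
    intro i
    induction i with
    | zero => simp [hS0, rnk_empty]
    | succ n ih =>
      intro hn
      rw [hSi (n + 1) (by omega) hn, Finset.union_comm]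
      exact hF.sum_sat_union_eq (hBmin (n + 1) (by omega) hn) (ih (by omega))
  intro i hi hik u hu
  rw [hSi i hi hik, Finset.union_comm]
  exact hF.sat_eq_rankRatio (hBmin i hi hik) (hsum (i - 1) (by omega)) u hu

/-- Let `M` be a matroid on a finite nonempty ground set (the whole type `α`).
Define `S 0 = ∅` and, iteratively, let `B i` be a maximal set `X ⊆ univ \ S (i-1)`
minimizing `(rnk (X ∪ S (i-1)) − rnk (S (i-1))) / |X|`, and `S i = S (i-1) ∪ B i`,
stopping at the first `k` with `S k = univ`.  Then under every maxmin-fair distribution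
`F` over the independent sets of `M`, the satisfaction probability of every `u ∈ B i`
equals `λ i = (rnk (S i) − rnk (S (i-1))) / |B i|`. -/
theorem maxminFair_sat_on_blocks_matroid [Fintype α] [DecidableEq α] [Nonempty α]
    (M : Matroid α) (hE : M.E = Set.univ)
    (k : ℕ) (hk : 1 ≤ k) (B S : ℕ → Finset α)
    (hS0 : S 0 = ∅) (hSk : S k = Finset.univ)
    (hSfirst : ∀ i, 1 ≤ i → i < k → S i ≠ Finset.univ)
    (hSi : ∀ i, 1 ≤ i → i ≤ k → S i = S (i - 1) ∪ B i)
    (hBmin : ∀ i, 1 ≤ i → i ≤ k → MinRatioSet M (S (i - 1)) (B i))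
    (hBmax : ∀ i, 1 ≤ i → i ≤ k →
      ∀ X : Finset α, MinRatioSet M (S (i - 1)) X → B i ⊆ X → X = B i)
    (F : Finset α → ℝ)
    (hF : MaxminFair (fun A : Finset α => M.Indep (A : Set α)) F) :
    ∀ i, 1 ≤ i → i ≤ k → ∀ u ∈ B i,
      sat F u = ((rnk M (S i) : ℝ) - (rnk M (S (i - 1)) : ℝ)) / ((B i).card : ℝ) :=
  maxminFair_sat_on_blocks_matroid_general M k B S hS0 hSi hBmin F hF
end

section
/- Let G be a finite bipartite graph with bipartition (L, R). If X and Y are nonempty subsets of L that both attain the minimum of |Γ(S)|/|S| over all nonempty S ⊆ L, then X ∪ Y also attains this minimum. Consequently, the maximal set minimizing |Γ(S)|/|S| is the union of all nonempty sets minimizing |Γ(S)|/|S|. -/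
/-!
A finite bipartite graph with bipartition `(L, R)` is modelled by its edge set
`E : Finset (L × R)`, with `L` nonempty.  `Minimizing E X` says that the nonempty set
`X ⊆ L` attains the minimum of `|Γ(S)| / |S|` over all nonempty `S ⊆ L`.
-/

variable {L R : Type*}

/-- The neighbourhood `Γ(S) ⊆ R` of a set `S ⊆ L` of left vertices. -/
def nbhd [DecidableEq L] [DecidableEq R] (E : Finset (L × R)) (S : Finset L) : Finset R :=
  (E.filter (fun e => e.1 ∈ S)).image Prod.snd

/-- `X` is a nonempty subset of `L` attaining the minimum of `|Γ(S)| / |S|` over all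
nonempty `S ⊆ L`. -/
def Minimizing [DecidableEq L] [DecidableEq R] (E : Finset (L × R)) (X : Finset L) : Prop :=
  X.Nonempty ∧ ∀ S : Finset L, S.Nonempty →
    ((nbhd E X).card : ℝ) / (X.card : ℝ) ≤ ((nbhd E S).card : ℝ) / (S.card : ℝ)

open scoped Classical

/-!
`S ↦ |Γ(S)|` is submodular: `|Γ(X ∪ Y)| + |Γ(X ∩ Y)| ≤ |Γ(X)| + |Γ(Y)|`. If `c` is the minimum
ratio, then `|Γ(S)| ≥ c |S|` for every `S` (also `S = ∅`), with equality at `X` and `Y`; so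
submodularity and `|X ∪ Y| + |X ∩ Y| = |X| + |Y|` give `|Γ(X ∪ Y)| ≤ c |X ∪ Y|`.
-/

open Finset

theorem Finset.le_mul_card_union_of_submodular {α : Type*} [DecidableEq α] {f : Finset α → ℝ}
    (hf : ∀ X Y, f (X ∪ Y) + f (X ∩ Y) ≤ f X + f Y) {c : ℝ} (hc : ∀ S, c * #S ≤ f S)
    {X Y : Finset α} (hX : f X ≤ c * #X) (hY : f Y ≤ c * #Y) :
    f (X ∪ Y) ≤ c * #(X ∪ Y) := by
  have hcard : (#(X ∪ Y) : ℝ) + #(X ∩ Y) = #X + #Y := by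
    exact_mod_cast card_union_add_card_inter X Y
  linear_combination hf X Y + hc (X ∩ Y) + hX + hY - c * hcard

section

variable [DecidableEq L] [DecidableEq R] {E : Finset (L × R)}

theorem mem_nbhd {S : Finset L} {r : R} : r ∈ nbhd E S ↔ ∃ l ∈ S, (l, r) ∈ E := by
  simp only [nbhd, mem_image, mem_filter, Prod.exists, exists_eq_right]
  exact exists_congr fun _ => and_comm

theorem nbhd_union (X Y : Finset L) : nbhd E (X ∪ Y) = nbhd E X ∪ nbhd E Y := by
  ext r
  simp only [mem_union, mem_nbhd, or_and_right, exists_or]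

theorem nbhd_mono {X Y : Finset L} (h : X ⊆ Y) : nbhd E X ⊆ nbhd E Y := fun _ hr =>
  let ⟨l, hl, hlr⟩ := mem_nbhd.1 hr
  mem_nbhd.2 ⟨l, h hl, hlr⟩

theorem card_nbhd_union_add_card_nbhd_inter_le (X Y : Finset L) :
    #(nbhd E (X ∪ Y)) + #(nbhd E (X ∩ Y)) ≤ #(nbhd E X) + #(nbhd E Y) := by
  rw [nbhd_union, ← card_union_add_card_inter (nbhd E X)]
  gcongr
  exact subset_inter (nbhd_mono inter_subset_left) (nbhd_mono inter_subset_right)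

variable (E) in
/-- The ratio `|Γ(S)| / |S|`; it is `0` at `S = ∅`. -/
noncomputable def expansion (S : Finset L) : ℝ := (#(nbhd E S) : ℝ) / #S

namespace Minimizing

variable {X Y : Finset L}

theorem mul_card_le (hX : Minimizing E X) (S : Finset L) :
    expansion E X * #S ≤ #(nbhd E S) := by
  rcases S.eq_empty_or_nonempty with rfl | hS
  · simp
  · exact (le_div_iff₀ (by exact_mod_cast hS.card_pos)).1 (hX.2 S hS)

theorem card_nbhd_eq (hX : Minimizing E X) : (#(nbhd E X) : ℝ) = expansion E X * #X :=
  (div_mul_cancel₀ _ (by exact_mod_cast hX.1.card_pos.ne')).symm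

theorem expansion_eq (hX : Minimizing E X) (hY : Minimizing E Y) :
    expansion E X = expansion E Y :=
  le_antisymm (hX.2 Y hY.1) (hY.2 X hX.1)

theorem of_card_nbhd_le (hX : Minimizing E X) (hY : Y.Nonempty)
    (h : (#(nbhd E Y) : ℝ) ≤ expansion E X * #Y) : Minimizing E Y :=
  ⟨hY, fun S hS => ((div_le_iff₀ (by exact_mod_cast hY.card_pos)).2 h).trans (hX.2 S hS)⟩

theorem union (hX : Minimizing E X) (hY : Minimizing E Y) : Minimizing E (X ∪ Y) := by
  refine hX.of_card_nbhd_le (hX.1.mono subset_union_left) ?_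
  refine le_mul_card_union_of_submodular (f := fun S => (#(nbhd E S) : ℝ))
    (fun A B => by exact_mod_cast card_nbhd_union_add_card_nbhd_inter_le A B)
    hX.mul_card_le hX.card_nbhd_eq.le ?_
  rw [hY.card_nbhd_eq, hY.expansion_eq hX]

end Minimizing

theorem exists_minimizing [Fintype L] [Nonempty L] (E : Finset (L × R)) :
    ∃ X, Minimizing E X := by
  obtain ⟨X, hX, hmin⟩ := exists_min_image (univ.filter Finset.Nonempty) (expansion E)
    ⟨{Classical.arbitrary L}, by simp⟩
  exact ⟨X, (mem_filter.1 hX).2, fun S hS => hmin S (by simp [hS])⟩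

end

theorem minimizing_union_general [Fintype L] [DecidableEq L] [DecidableEq R]
    [Nonempty L] (E : Finset (L × R)) :
    (∀ X Y : Finset L, Minimizing E X → Minimizing E Y → Minimizing E (X ∪ Y)) ∧
    (Minimizing E (Finset.univ.filter fun v : L => ∃ S : Finset L, Minimizing E S ∧ v ∈ S) ∧
      ∀ S : Finset L, Minimizing E S →
        S ⊆ Finset.univ.filter fun v : L => ∃ T : Finset L, Minimizing E T ∧ v ∈ T) := by
  refine ⟨fun X Y hX hY => hX.union hY, ?_, fun S hS v hv => by simpa using ⟨S, hS, hv⟩⟩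
  obtain ⟨X₀, hX₀⟩ := exists_minimizing E
  have hM : (univ.filter (Minimizing E)).Nonempty := ⟨X₀, by simpa using hX₀⟩
  have hunion : (univ.filter fun v : L => ∃ S : Finset L, Minimizing E S ∧ v ∈ S) =
      (univ.filter (Minimizing E)).sup' hM id := by
    ext v
    simp [mem_sup']
  rw [hunion]
  exact sup'_induction hM id (fun _ hX _ hY => hX.union hY) fun S hS => (mem_filter.1 hS).2

/-- If `X` and `Y` both attain the minimum of `|Γ(S)| / |S|` over nonempty `S ⊆ L`, then
so does `X ∪ Y`.  Consequently, the union of all nonempty minimizing sets is itself a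
minimizing set, i.e. the (unique) maximal minimizing set. -/
theorem minimizing_union [Fintype L] [Fintype R] [DecidableEq L] [DecidableEq R]
    [Nonempty L] (E : Finset (L × R)) :
    (∀ X Y : Finset L, Minimizing E X → Minimizing E Y → Minimizing E (X ∪ Y)) ∧
    (Minimizing E (Finset.univ.filter fun v : L => ∃ S : Finset L, Minimizing E S ∧ v ∈ S) ∧
      ∀ S : Finset L, Minimizing E S →
        S ⊆ Finset.univ.filter fun v : L => ∃ T : Finset L, Minimizing E T ∧ v ∈ T) :=
  minimizing_union_general E
end
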